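/- Let X₀ = √−1·diag(−1,−1,2) ∈ su(3). There exist a real number λ ≠ 0, a real number l > 0, and an inner product α on su(3) such that √(α(Y,Y)) + λ·⟨Y,X₀⟩_bi = l for all Y in the adjoint orbit {uX₀u⁻¹ : u ∈ SU(3)} (where ⟨A,B⟩_bi = Re tr(Aᴴ B)), while the function Y ↦ α(Y,Y) is not constant on this orbit. Hence X₀ generates a Killing vector field of constant length for the left-invariant Randers metric F = √(α(·,·)) + λ⟨·,X₀⟩_bi on SU(3) but not of constant length for the underlying Riemannian metric α. -/

import Mathlib

open Matrix

attribute [local instance 100] LieRing.ofAssociativeRing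

/-- The real Lie algebra `su(n)` of traceless skew-Hermitian `n × n` complex matrices,
as a Lie subalgebra of the Lie algebra of all `n × n` complex matrices (with commutator
bracket). -/
def su (n : ℕ) : LieSubalgebra ℝ (Matrix (Fin n) (Fin n) ℂ) where
  carrier := {A | Aᴴ = -A ∧ A.trace = 0}
  add_mem' := by
    rintro A B ⟨hA1, hA2⟩ ⟨hB1, hB2⟩
    constructor
    · simp [conjTranspose_add, hA1, hB1]; abel
    · simp [trace_add, hA2, hB2]
  zero_mem' := by simp
  smul_mem' := by
    rintro c A ⟨hA1, hA2⟩
    constructor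
    · simp [conjTranspose_smul, hA1]
    · simp [trace_smul, hA2]
  lie_mem' := by
    rintro A B ⟨hA1, hA2⟩ ⟨hB1, hB2⟩
    constructor
    · simp only [Ring.lie_def, conjTranspose_sub, conjTranspose_mul, hA1, hB1]
      simp only [mul_neg, neg_mul, neg_sub, neg_neg]
    · simp [Ring.lie_def, trace_sub, trace_mul_comm A B]

/-- The bi-invariant inner product `⟨A, B⟩_bi = Re tr(Aᴴ B)`. -/
noncomputable def binner {n : ℕ} (A B : Matrix (Fin n) (Fin n) ℂ) : ℝ :=
  ((Aᴴ * B).trace).re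

theorem conj_mem_su {n : ℕ} (u : specialUnitaryGroup (Fin n) ℂ) {A : Matrix (Fin n) (Fin n) ℂ}
    (hA : A ∈ su n) : (u : Matrix (Fin n) (Fin n) ℂ) * A * (u : Matrix (Fin n) (Fin n) ℂ)ᴴ ∈ su n := by
  obtain ⟨hA1, hA2⟩ := hA
  have hu : (u : Matrix (Fin n) (Fin n) ℂ)ᴴ * (u : Matrix (Fin n) (Fin n) ℂ) = 1 := by
    have hmem : (u : Matrix (Fin n) (Fin n) ℂ) ∈ unitaryGroup (Fin n) ℂ :=
      (Submonoid.mem_inf.mp u.2).1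
    rw [Matrix.mem_unitaryGroup_iff'] at hmem
    simpa [Matrix.star_eq_conjTranspose] using hmem
  constructor
  · simp only [conjTranspose_mul, conjTranspose_conjTranspose, hA1]
    simp [Matrix.mul_assoc]
  · calc ((u : Matrix (Fin n) (Fin n) ℂ) * A * (u : Matrix (Fin n) (Fin n) ℂ)ᴴ).trace
        = ((u : Matrix (Fin n) (Fin n) ℂ)ᴴ * ((u : Matrix (Fin n) (Fin n) ℂ) * A)).trace := by
          rw [trace_mul_comm]
      _ = A.trace := by rw [← Matrix.mul_assoc, hu, Matrix.one_mul]
      _ = 0 := hA2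

/-- The adjoint action of `SU(n)` on `su(n)`: `Ad u X = u X u⁻¹ = u X uᴴ`. -/
noncomputable def Ad {n : ℕ} (u : specialUnitaryGroup (Fin n) ℂ) (X : su n) : su n :=
  ⟨(u : Matrix (Fin n) (Fin n) ℂ) * (X : Matrix (Fin n) (Fin n) ℂ) *
    (u : Matrix (Fin n) (Fin n) ℂ)ᴴ, conj_mem_su u X.2⟩

/-- The matrix `X₀ = √−1·diag(−1,−1,2) ∈ su(3)`. -/
noncomputable def X₀ : su 3 :=
  ⟨Matrix.diagonal ![-Complex.I, -Complex.I, 2 * Complex.I], by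
    constructor
    · ext i j
      fin_cases i <;> fin_cases j <;>
        simp [Matrix.diagonal, Matrix.conjTranspose_apply]
    · simp [Matrix.trace_diagonal, Fin.sum_univ_three]
      ring⟩

/-!
The matrix `X₀` satisfies `X₀ᴴ X₀ = 2 + i X₀ᴴ`, an identity preserved by conjugation, so every `Y`
in its orbit satisfies it too. Hence on the orbit `⟨Y, Y⟩_bi = 6`, and the real bilinear form
`q(A, B) = Im tr(Aᴴ B X₀)` satisfies `q(Y, Y) = ⟨Y, X₀⟩_bi =: t`. Taking
`α = 6 ⟨·,·⟩_bi - 2 q + ⟨·, X₀⟩_bi ⊗ ⟨·, X₀⟩_bi / 36` gives `α(Y, Y) = (6 - t/6)²` on the orbit,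
and as `t ≤ 6` we get `√(α(Y, Y)) + t/6 = 6`. The form `α` is positive definite because
`|q(A, A)| ≤ 2 ⟨A, A⟩_bi`, and `α(Y, Y)` is not constant because `t` takes the values `6` at
`Y = X₀` and `-3` at a cyclic permutation of `X₀`.
-/

open Complex
open scoped ComplexOrder

section binner

variable {n : ℕ}

lemma binner_comm (A B : Matrix (Fin n) (Fin n) ℂ) : binner A B = binner B A := by
  rw [binner, binner, ← conj_re, ← star_def, ← trace_conjTranspose, conjTranspose_mul,
    conjTranspose_conjTranspose]

lemma binner_self_nonneg (A : Matrix (Fin n) (Fin n) ℂ) : 0 ≤ binner A A :=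
  (nonneg_iff.mp (posSemidef_conjTranspose_mul_self A).trace_nonneg).1

lemma binner_self_pos {A : Matrix (Fin n) (Fin n) ℂ} (hA : A ≠ 0) : 0 < binner A A := by
  refine (binner_self_nonneg A).lt_of_ne fun h => hA ?_
  have him := (nonneg_iff.mp (posSemidef_conjTranspose_mul_self A).trace_nonneg).2
  exact trace_conjTranspose_mul_self_eq_zero_iff.mp (Complex.ext h.symm him.symm)

lemma two_mul_binner_le (A B : Matrix (Fin n) (Fin n) ℂ) :
    2 * binner A B ≤ binner A A + binner B B := by
  have h := binner_self_nonneg (A - B)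
  simp only [binner, conjTranspose_sub, sub_mul, mul_sub, trace_sub, sub_re] at h
  have := binner_comm A B
  unfold binner at *
  linarith

noncomputable def binnerForm (n : ℕ) : LinearMap.BilinForm ℝ (Matrix (Fin n) (Fin n) ℂ) :=
  LinearMap.mk₂ ℝ binner
    (fun _ _ _ => by simp [binner, conjTranspose_add, add_mul])
    (fun _ _ _ => by simp [binner, conjTranspose_smul, Complex.real_smul])
    (fun _ _ _ => by simp [binner, mul_add])
    (fun _ _ _ => by simp [binner, Complex.real_smul])

@[simp] lemma binnerForm_apply (A B : Matrix (Fin n) (Fin n) ℂ) : binnerForm n A B = binner A B :=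
  rfl

end binner

section imTraceForm

variable {n : ℕ}

noncomputable def imTraceForm (K : Matrix (Fin n) (Fin n) ℂ) :
    LinearMap.BilinForm ℝ (Matrix (Fin n) (Fin n) ℂ) :=
  LinearMap.mk₂ ℝ (fun A B => (Aᴴ * B * K).trace.im)
    (fun _ _ _ => by simp [conjTranspose_add, add_mul])
    (fun _ _ _ => by simp [conjTranspose_smul, Complex.real_smul])
    (fun _ _ _ => by simp [mul_add, add_mul])
    (fun _ _ _ => by simp [Complex.real_smul])

lemma imTraceForm_apply (K A B : Matrix (Fin n) (Fin n) ℂ) :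
    imTraceForm K A B = (Aᴴ * B * K).trace.im :=
  rfl

lemma imTraceForm_comm {K : Matrix (Fin n) (Fin n) ℂ} (hK : Kᴴ = -K)
    (A B : Matrix (Fin n) (Fin n) ℂ) : imTraceForm K A B = imTraceForm K B A := by
  rw [imTraceForm_apply, imTraceForm_apply, ← neg_neg (Aᴴ * B * K).trace.im, ← conj_im,
    ← star_def, ← trace_conjTranspose]
  simp [conjTranspose_mul, hK, Matrix.mul_assoc, trace_mul_comm K]

lemma abs_imTraceForm_diagonal_self_le {d : Fin n → ℂ} {c : ℝ} (hd : ∀ k, |(d k).im| ≤ c)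
    (A : Matrix (Fin n) (Fin n) ℂ) : |imTraceForm (diagonal d) A A| ≤ c * binner A A := by
  have hP := posSemidef_conjTranspose_mul_self A
  have hdiag : ∀ k, 0 ≤ ((Aᴴ * A) k k).re ∧ 0 = ((Aᴴ * A) k k).im :=
    fun k => nonneg_iff.mp hP.diag_nonneg
  have hform : imTraceForm (diagonal d) A A = ∑ k, ((Aᴴ * A) k k).re * (d k).im := by
    simp [imTraceForm_apply, trace, mul_diagonal, ← (hdiag _).2]
  have hbinner : binner A A = ∑ k, ((Aᴴ * A) k k).re := by
    simp [binner, trace]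
  rw [hform, hbinner, Finset.mul_sum]
  refine (Finset.abs_sum_le_sum_abs _ _).trans (Finset.sum_le_sum fun k _ => ?_)
  rw [abs_mul, abs_of_nonneg (hdiag k).1, mul_comm]
  exact mul_le_mul_of_nonneg_right (hd k) (hdiag k).1

lemma imTraceForm_self_eq_binner {K A : Matrix (Fin n) (Fin n) ℂ} {c : ℂ} (hK : K.trace = 0)
    (hA : Aᴴ * A = c • 1 + I • Aᴴ) : imTraceForm K A A = binner A K := by
  simp [imTraceForm_apply, binner, hA, add_mul, trace_add, hK]

end imTraceForm

section conj

variable {n : ℕ} (u : unitary (Matrix (Fin n) (Fin n) ℂ))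

local notation "conjU" => Unitary.conjStarAlgAut ℂ (Matrix (Fin n) (Fin n) ℂ) u

lemma trace_conjStarAlgAut (M : Matrix (Fin n) (Fin n) ℂ) : (conjU M).trace = M.trace := by
  rw [Unitary.conjStarAlgAut_apply, trace_mul_comm, ← Matrix.mul_assoc, Unitary.coe_star_mul_self,
    Matrix.one_mul]

lemma binner_conjStarAlgAut (A B : Matrix (Fin n) (Fin n) ℂ) :
    binner (conjU A) (conjU B) = binner A B := by
  rw [binner, ← star_eq_conjTranspose, ← map_star, ← map_mul, trace_conjStarAlgAut,
    star_eq_conjTranspose, binner]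

lemma conjStarAlgAut_conjTranspose_mul_self {A : Matrix (Fin n) (Fin n) ℂ} {c : ℂ}
    (hA : Aᴴ * A = c • 1 + I • Aᴴ) :
    (conjU A)ᴴ * conjU A = c • 1 + I • (conjU A)ᴴ := by
  simp only [← star_eq_conjTranspose, ← map_star, ← map_mul] at hA ⊢
  rw [hA, map_add, map_smul, map_smul, map_one]

end conj

local notation "M₃" => Matrix (Fin 3) (Fin 3) ℂ

lemma coe_Ad {n : ℕ} (u : specialUnitaryGroup (Fin n) ℂ) (X : su n) :
    (Ad u X : Matrix (Fin n) (Fin n) ℂ) =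
      Unitary.conjStarAlgAut ℂ (Matrix (Fin n) (Fin n) ℂ)
        (Submonoid.inclusion specialUnitaryGroup_le_unitaryGroup u) X :=
  rfl

lemma Ad_one {n : ℕ} (X : su n) : Ad 1 X = X :=
  Subtype.ext (by simp [Ad])

lemma coe_X₀ : (X₀ : M₃) = diagonal ![-I, -I, 2 * I] :=
  rfl

lemma X₀_conjTranspose_mul_self :
    (X₀ : M₃)ᴴ * X₀ = (2 : ℂ) • 1 + I • (X₀ : M₃)ᴴ := by
  rw [coe_X₀, diagonal_conjTranspose, diagonal_mul_diagonal, ← diagonal_one, ← diagonal_smul,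
    ← diagonal_smul, diagonal_add]
  congr 1
  ext k
  fin_cases k <;> simp [Complex.ext_iff] <;> norm_num

lemma binner_X₀_self : binner (X₀ : M₃) X₀ = 6 := by
  rw [binner, coe_X₀, diagonal_conjTranspose, diagonal_mul_diagonal, trace_diagonal]
  simp [Fin.sum_univ_three]
  norm_num

noncomputable def randersAlpha : LinearMap.BilinForm ℝ (su 3) :=
  ((6 : ℝ) • binnerForm 3 - (2 : ℝ) • imTraceForm (X₀ : M₃)
    + (36⁻¹ : ℝ) • ((binnerForm 3).flip X₀).smulRight ((binnerForm 3).flip X₀)).compl₁₂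
    ((su 3).incl : su 3 →ₗ[ℝ] M₃) ((su 3).incl : su 3 →ₗ[ℝ] M₃)

lemma randersAlpha_apply (x y : su 3) :
    randersAlpha x y = 6 * binner (x : M₃) y - 2 * imTraceForm (X₀ : M₃) x y
      + binner (x : M₃) X₀ * binner (y : M₃) X₀ / 36 := by
  simp [randersAlpha]
  ring

section orbit

variable (u : specialUnitaryGroup (Fin 3) ℂ)

lemma binner_Ad_X₀_self : binner (Ad u X₀ : M₃) (Ad u X₀) = 6 := by
  rw [coe_Ad, binner_conjStarAlgAut, binner_X₀_self]

lemma imTraceForm_Ad_X₀_self :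
    imTraceForm (X₀ : M₃) (Ad u X₀) (Ad u X₀) = binner (Ad u X₀ : M₃) X₀ := by
  have h := conjStarAlgAut_conjTranspose_mul_self
    (Submonoid.inclusion specialUnitaryGroup_le_unitaryGroup u) X₀_conjTranspose_mul_self
  rw [← coe_Ad] at h
  exact imTraceForm_self_eq_binner X₀.2.2 h

lemma binner_Ad_X₀_le : binner (Ad u X₀ : M₃) X₀ ≤ 6 := by
  linarith [two_mul_binner_le (Ad u X₀ : M₃) X₀, binner_Ad_X₀_self u, binner_X₀_self]

lemma randersAlpha_Ad_X₀_self :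
    randersAlpha (Ad u X₀) (Ad u X₀) = (6 - binner (Ad u X₀ : M₃) X₀ / 6) ^ 2 := by
  rw [randersAlpha_apply, binner_Ad_X₀_self, imTraceForm_Ad_X₀_self]
  ring

end orbit

lemma exists_binner_Ad_X₀_eq_neg_three :
    ∃ u : specialUnitaryGroup (Fin 3) ℂ, binner (Ad u X₀ : M₃) X₀ = -3 := by
  let P : M₃ := !![0, 0, 1; 1, 0, 0; 0, 1, 0]
  have hP : P ∈ specialUnitaryGroup (Fin 3) ℂ := by
    refine mem_specialUnitaryGroup_iff.mpr
      ⟨mem_unitaryGroup_iff'.mpr ?_, by simp [P, det_fin_three]⟩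
    ext i j
    fin_cases i <;> fin_cases j <;> simp [P, star_eq_conjTranspose, mul_apply, Fin.sum_univ_three]
  have hAd : (Ad ⟨P, hP⟩ X₀ : M₃) = diagonal ![2 * I, -I, -I] := by
    ext i j
    simp only [Ad, coe_X₀, mul_apply, conjTranspose_apply, Fin.sum_univ_three]
    fin_cases i <;> fin_cases j <;> simp [P]
  refine ⟨⟨P, hP⟩, ?_⟩
  rw [hAd, binner, coe_X₀, diagonal_conjTranspose, diagonal_mul_diagonal, trace_diagonal]
  simp [Fin.sum_univ_three]
  norm_num

lemma randersAlpha_comm (x y : su 3) : randersAlpha x y = randersAlpha y x := by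
  rw [randersAlpha_apply, randersAlpha_apply, binner_comm (x : M₃), imTraceForm_comm X₀.2.1]
  ring

lemma randersAlpha_self_pos {x : su 3} (hx : x ≠ 0) : 0 < randersAlpha x x := by
  have hpos := binner_self_pos fun h => hx (Subtype.ext h)
  have hform := abs_le.mp (abs_imTraceForm_diagonal_self_le (d := ![-I, -I, 2 * I]) (c := 2)
    (by intro k; fin_cases k <;> simp) (x : M₃))
  rw [← coe_X₀] at hform
  rw [randersAlpha_apply]
  nlinarith [sq_nonneg (binner (x : M₃) X₀)]

/-- there exist `λ ≠ 0`, `l > 0` and an inner product `α` on `su(3)` such that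
`√(α(Y,Y)) + λ·⟨Y,X₀⟩_bi = l` on the adjoint orbit of `X₀`, while `Y ↦ α(Y,Y)` is not
constant on this orbit. -/
theorem stmt_12 :
    ∃ (lam l : ℝ) (α : (su 3) →ₗ[ℝ] (su 3) →ₗ[ℝ] ℝ),
      lam ≠ 0 ∧ 0 < l ∧
      (∀ x y : su 3, α x y = α y x) ∧
      (∀ x : su 3, x ≠ 0 → 0 < α x x) ∧
      (∀ Y : su 3, (∃ u : specialUnitaryGroup (Fin 3) ℂ, Y = Ad u X₀) →
        Real.sqrt (α Y Y) +
          lam * binner (Y : Matrix (Fin 3) (Fin 3) ℂ) (X₀ : Matrix (Fin 3) (Fin 3) ℂ) = l) ∧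
      ¬ (∃ c : ℝ, ∀ Y : su 3, (∃ u : specialUnitaryGroup (Fin 3) ℂ, Y = Ad u X₀) →
          α Y Y = c) := by
  refine ⟨1 / 6, 6, randersAlpha, by norm_num, by norm_num, randersAlpha_comm,
    fun _ => randersAlpha_self_pos, ?_, ?_⟩
  · rintro _ ⟨u, rfl⟩
    rw [randersAlpha_Ad_X₀_self, Real.sqrt_sq (by linarith [binner_Ad_X₀_le u])]
    ring
  · rintro ⟨c, hc⟩
    obtain ⟨u, hu⟩ := exists_binner_Ad_X₀_eq_neg_three
    have h₁ := hc (Ad 1 X₀) ⟨1, rfl⟩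
    have h₂ := hc (Ad u X₀) ⟨u, rfl⟩
    rw [randersAlpha_Ad_X₀_self, Ad_one, binner_X₀_self] at h₁
    rw [randersAlpha_Ad_X₀_self, hu] at h₂
    norm_num [← h₂] at h₁
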